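/- There exists a resolvable (5K_8, K_4−e)-design: the edge multiset of 5K_8 can be decomposed into copies of K_4−e grouped into 14 parallel classes, each class consisting of two vertex-disjoint copies of K_4−e covering all 8 vertices. -/

import Mathlib

/-- The multiset of edges of a simple graph on `Fin m`. -/
noncomputable def edgeMultiset {m : ℕ} (H : SimpleGraph (Fin m)) : Multiset (Sym2 (Fin m)) :=
  (Set.toFinite H.edgeSet).toFinset.val

/-- The number of edges of a simple graph on `Fin m`. -/
noncomputable def edgeCount {m : ℕ} (H : SimpleGraph (Fin m)) : ℕ := (edgeMultiset H).card

/-- The multiset of edges of the copy of `G` given by the embedding `f`. -/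
noncomputable def blockEdges {n v : ℕ} (G : SimpleGraph (Fin n)) (f : Fin n ↪ Fin v) :
    Multiset (Sym2 (Fin v)) :=
  (edgeMultiset G).map (Sym2.map ⇑f)

/-- `classes` is a resolvable decomposition of the multigraph `lam • H` into copies
of `G`: each parallel class covers every vertex exactly once, and the edges of all
blocks, counted with multiplicity, are exactly the edges of `H` taken `lam` times. -/
def IsResolvableDecomp {n v : ℕ} (lam : ℕ) (G : SimpleGraph (Fin n))
    (H : SimpleGraph (Fin v))
    (classes : Multiset (Multiset (Fin n ↪ Fin v))) : Prop :=
  (∀ P ∈ classes, P.bind (fun f => Multiset.map ⇑f Finset.univ.val) =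
      (Finset.univ : Finset (Fin v)).val) ∧
  (classes.bind id).bind (fun f => blockEdges G f) = lam • edgeMultiset H

/-- A resolvable `(λ K_v, G)`-design. -/
def IsResolvableDesign {n : ℕ} (lam v : ℕ) (G : SimpleGraph (Fin n))
    (classes : Multiset (Multiset (Fin n ↪ Fin v))) : Prop :=
  IsResolvableDecomp lam G (⊤ : SimpleGraph (Fin v)) classes

/-- The 4-cycle `C₄`. -/
def cycle4 : SimpleGraph (Fin 4) :=
  SimpleGraph.fromRel (fun a b => (a.val, b.val) ∈ [(0,1),(1,2),(2,3),(3,0)])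

/-- The kite `K₃ + e` (triangle `0,1,2` with pendant edge `{2,3}`). -/
def kite : SimpleGraph (Fin 4) :=
  SimpleGraph.fromRel (fun a b => (a.val, b.val) ∈ [(0,1),(0,2),(1,2),(2,3)])

/-- The 3-star `K_{1,3}` with center `0`. -/
def star3 : SimpleGraph (Fin 4) :=
  SimpleGraph.fromRel (fun a b => (a.val, b.val) ∈ [(0,1),(0,2),(0,3)])

/-- The graph `K₄ - e` (missing the edge `{2,3}`). -/
def k4e : SimpleGraph (Fin 4) :=
  SimpleGraph.fromRel (fun a b => (a.val, b.val) ∈ [(0,1),(0,2),(1,2),(0,3),(1,3)])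


/-! Develop the two base parallel classes under `Z_7`, acting on `Z_7 ∪ {∞}` by translation and
fixing `∞`. A translate of a parallel class is again a parallel class. The multiset of all block
edges is invariant under translation, so the multiplicity of a pair only depends on its orbit.
Besides the loops there are four orbits of pairs, `{∞, x}` and the pure differences `±1, ±2, ±3`,
and since `7` is odd no pair is fixed by a nonzero translation, so it suffices that each orbit
contains exactly `5` of the `20` edges of the four base blocks. -/

open Function

def IsParallelClass {n v : ℕ} (P : Multiset (Fin n ↪ Fin v)) : Prop :=
  P.bind (fun f => Multiset.map ⇑f Finset.univ.val) = (Finset.univ : Finset (Fin v)).val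

section Blocks

variable {n v : ℕ}

theorem blockEdges_trans (G : SimpleGraph (Fin n)) (f : Fin n ↪ Fin v) (g : Fin v ↪ Fin v) :
    blockEdges G (f.trans g) = (blockEdges G f).map (Sym2.map g) := by
  simp only [blockEdges, Multiset.map_map, comp_def, Sym2.map_map]
  rfl

theorem IsParallelClass.map_trans {P : Multiset (Fin n ↪ Fin v)} (hP : IsParallelClass P)
    (σ : Equiv.Perm (Fin v)) : IsParallelClass (P.map (·.trans σ.toEmbedding)) := by
  have hσ : Finset.univ.val.map σ = Finset.univ.val :=
    congrArg Finset.val (Finset.map_univ_equiv σ)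
  unfold IsParallelClass at hP ⊢
  simp only [Multiset.bind_map, Function.Embedding.trans_apply, Equiv.coe_toEmbedding]
  rw [← hσ, ← hP, Multiset.map_bind]
  simp only [Multiset.map_map, comp_def]

end Blocks

section Development

variable (A : Type*) {V : Type*} [AddGroup A] [Fintype A] [AddAction A V]

def developEdges (E : Multiset (Sym2 V)) : Multiset (Sym2 V) :=
  (Finset.univ : Finset A).val.bind fun a => E.map (Sym2.map (a +ᵥ ·))

def developClasses {n v : ℕ} [AddAction A (Fin v)] (C : Multiset (Multiset (Fin n ↪ Fin v))) :
    Multiset (Multiset (Fin n ↪ Fin v)) :=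
  (Finset.univ : Finset A).val.bind fun a =>
    C.map (Multiset.map (·.trans (AddAction.toPerm a : Equiv.Perm (Fin v)).toEmbedding))

variable {A}

theorem developEdges_map_vadd (E : Multiset (Sym2 V)) (b : A) :
    (developEdges A E).map (Sym2.map (b +ᵥ ·)) = developEdges A E := by
  simp only [developEdges, Multiset.map_bind, Multiset.map_map, comp_def, Sym2.map_map, vadd_vadd]
  exact Fintype.sum_equiv (Equiv.addLeft b) _ _ (fun a => rfl)

theorem count_developEdges_vadd [DecidableEq V] (E : Multiset (Sym2 V)) (b : A) (e : Sym2 V) :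
    (developEdges A E).count (e.map (b +ᵥ ·)) = (developEdges A E).count e := by
  conv_lhs => rw [← developEdges_map_vadd E b]
  exact Multiset.count_map_eq_count' _ _ (Sym2.map.injective (AddAction.injective b)) e

variable {n v : ℕ} [AddAction A (Fin v)]

theorem isParallelClass_of_mem_developClasses {C : Multiset (Multiset (Fin n ↪ Fin v))}
    (hC : ∀ P ∈ C, IsParallelClass P) : ∀ P ∈ developClasses A C, IsParallelClass P := by
  simp only [developClasses, Multiset.mem_bind, Multiset.mem_map]
  rintro _ ⟨a, -, P, hP, rfl⟩
  exact (hC P hP).map_trans _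

theorem card_of_mem_developClasses {C : Multiset (Multiset (Fin n ↪ Fin v))} {k : ℕ}
    (hC : ∀ P ∈ C, Multiset.card P = k) : ∀ P ∈ developClasses A C, Multiset.card P = k := by
  simp only [developClasses, Multiset.mem_bind, Multiset.mem_map]
  rintro _ ⟨a, -, P, hP, rfl⟩
  rw [Multiset.card_map, hC P hP]

theorem card_developClasses (C : Multiset (Multiset (Fin n ↪ Fin v))) :
    Multiset.card (developClasses A C) = Fintype.card A * Multiset.card C := by
  simp [developClasses]

theorem blockEdges_developClasses (G : SimpleGraph (Fin n))
    (C : Multiset (Multiset (Fin n ↪ Fin v))) :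
    ((developClasses A C).bind id).bind (blockEdges G) =
      developEdges A ((C.bind id).bind (blockEdges G)) := by
  simp only [developClasses, developEdges, Multiset.bind_assoc, Multiset.bind_map, id,
    Multiset.map_bind, blockEdges_trans]
  rfl

end Development

/-- `Fin 8` models `Z_7 ∪ {∞}` with `∞ = 7`; `i` acts by `x ↦ x + i` and fixes `∞`. -/
instance : AddAction (ZMod 7) (Fin 8) where
  vadd i x := if x = 7 then 7 else ⟨(x.val + i.val) % 7, by omega⟩
  zero_vadd := by decide
  add_vadd := by decide

local notation "∞" => (7 : Fin 8)

instance : DecidableRel k4e.Adj := fun a b => by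
  unfold k4e SimpleGraph.fromRel
  exact inferInstanceAs (Decidable (_ ∧ _))

theorem edgeMultiset_eq_edgeFinset_val {m : ℕ} (H : SimpleGraph (Fin m)) [DecidableRel H.Adj] :
    edgeMultiset H = H.edgeFinset.val := by
  simp only [edgeMultiset, Set.Finite.toFinset_eq_toFinset, SimpleGraph.edgeFinset]

/-- The paper's `(a, b, c; d)`, with edges `ab, ac, bc, ad, bd`. -/
def k4eCopy (a b c d : Fin 8) (h : Injective ![a, b, c, d] := by decide) : Fin 4 ↪ Fin 8 :=
  ⟨![a, b, c, d], h⟩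

def baseClasses : Multiset (Multiset (Fin 4 ↪ Fin 8)) :=
  {{k4eCopy ∞ 4 5 0, k4eCopy 1 2 3 6}, {k4eCopy 0 3 ∞ 2, k4eCopy 1 6 5 4}}

/-- One pair from each `Z_7`-orbit: `{∞, x}`, the differences `±1, ±2, ±3`, and the loops. -/
def orbitReps : List (Sym2 (Fin 8)) :=
  [s(∞, 0), s(0, 1), s(0, 2), s(0, 3), s(∞, ∞), s(0, 0)]

theorem exists_eq_map_vadd_orbitRep :
    ∀ e : Sym2 (Fin 8), ∃ i : ZMod 7, ∃ r ∈ orbitReps, e = r.map (i +ᵥ ·) := by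
  decide

theorem isParallelClass_of_mem_baseClasses : ∀ P ∈ baseClasses, IsParallelClass P := by
  unfold IsParallelClass
  decide

theorem count_developEdges_baseClasses :
    ∀ r ∈ orbitReps,
      (developEdges (ZMod 7) ((baseClasses.bind id).bind (blockEdges k4e))).count r =
        if r.IsDiag then 0 else 5 := by
  unfold blockEdges
  simp only [edgeMultiset_eq_edgeFinset_val]
  decide

theorem developEdges_baseClasses :
    developEdges (ZMod 7) ((baseClasses.bind id).bind (blockEdges k4e)) =
      5 • edgeMultiset (⊤ : SimpleGraph (Fin 8)) := by
  ext e
  obtain ⟨i, r, hr, rfl⟩ := exists_eq_map_vadd_orbitRep e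
  rw [count_developEdges_vadd, count_developEdges_baseClasses r hr, Multiset.count_nsmul,
    edgeMultiset_eq_edgeFinset_val, Multiset.count_eq_of_nodup (Finset.nodup _)]
  simp [Sym2.isDiag_map (AddAction.injective i)]

theorem stmt10 :
    ∃ classes : Multiset (Multiset (Fin 4 ↪ Fin 8)),
      IsResolvableDesign 5 8 k4e classes ∧
      Multiset.card classes = 14 ∧
      ∀ P ∈ classes, Multiset.card P = 2 := by
  refine ⟨developClasses (ZMod 7) baseClasses,
    ⟨isParallelClass_of_mem_developClasses isParallelClass_of_mem_baseClasses, ?_⟩, ?_, ?_⟩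
  · exact (blockEdges_developClasses k4e baseClasses).trans developEdges_baseClasses
  · rw [card_developClasses]
    rfl
  · exact card_of_mem_developClasses (by decide)
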